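/- Let n > 1 be an integer and regard the adjacency matrix of the Möbius ladder M_{2n} as a real matrix. Then for every real number x, det(x · I_{2n} - A(M_{2n})) = ∏_{j=1}^{2n} (x - ((-1)^j + 2 cos(j π / n))). -/

import Mathlib

open SimpleGraph Matrix Real Finset

/-- The Möbius ladder on `2 * n` vertices: vertices `i` and `j` in `ZMod (2 * n)` are
adjacent if and only if `i - j ≡ 1, -1` or `n (mod 2 * n)`. -/
def mobiusLadder (n : ℕ) : SimpleGraph (ZMod (2 * n)) :=
  SimpleGraph.fromRel (fun i j => i - j = 1 ∨ i - j = (n : ZMod (2 * n)))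

/-!
The Möbius ladder is the circulant graph on `ZMod (2 * n)` with jumps `±1` and `n`, so its
adjacency matrix is the circulant matrix of the indicator of `{1, -1, n}`. For a primitive additive
character `ψ` of a finite commutative ring `G`, the character table `(ψ (i * j))` intertwines
every circulant matrix with the diagonal matrix of its Fourier coefficients, and it is invertible
because, by orthogonality, its product with the table of `ψ⁻¹` is `#G • 1`. With
`ψ k = exp (π I k / n)` the Fourier coefficients of the Möbius ladder are
`ψ j + ψ (-j) + ψ (j n) = 2 cos (j π / n) + (-1) ^ j`.
-/

namespace AddChar

variable {G R : Type*} [CommRing G] [CommRing R]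

def charMatrix (ψ : AddChar G R) : Matrix G G R := of fun i j => ψ (i * j)

@[simp]
theorem charMatrix_apply (ψ : AddChar G R) (i j : G) : charMatrix ψ i j = ψ (i * j) := rfl

variable [Fintype G] [DecidableEq G]

theorem charMatrix_mul_circulant (ψ : AddChar G R) (v : G → R) :
    charMatrix ψ * circulant v = diagonal (fun i => ∑ m, v m * ψ (i * m)) * charMatrix ψ := by
  ext i j
  rw [Matrix.mul_apply, diagonal_mul, Finset.sum_mul]
  refine Fintype.sum_equiv (Equiv.subRight j) _ _ fun k => ?_
  rw [Equiv.subRight_apply, charMatrix_apply, charMatrix_apply, circulant_apply, mul_assoc,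
    ← map_add_eq_mul, ← mul_add, sub_add_cancel, mul_comm]

theorem charMatrix_mul_charMatrix_inv [IsDomain R] {ψ : AddChar G R} (hψ : ψ.IsPrimitive) :
    charMatrix ψ * charMatrix ψ⁻¹ = (Fintype.card G : R) • 1 := by
  ext i j
  have h := sum_mulShift (i - j) hψ
  simp only [sub_eq_zero, Nat.cast_ite, Nat.cast_zero] at h
  simp only [Matrix.mul_apply, charMatrix_apply, inv_apply, ← map_add_eq_mul, Matrix.smul_apply,
    Matrix.one_apply, smul_eq_mul, mul_ite, mul_one, mul_zero, ← h]
  refine Fintype.sum_congr _ _ fun k => ?_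
  ring_nf

theorem det_charMatrix_ne_zero [IsDomain R] [CharZero R] {ψ : AddChar G R} (hψ : ψ.IsPrimitive) :
    (charMatrix ψ).det ≠ 0 := by
  have h := congrArg det (charMatrix_mul_charMatrix_inv hψ)
  rw [det_mul, det_smul, det_one, mul_one] at h
  exact left_ne_zero_of_mul (h ▸ pow_ne_zero _ (Nat.cast_ne_zero.mpr Fintype.card_ne_zero))

theorem det_circulant [IsDomain R] [CharZero R] {ψ : AddChar G R} (hψ : ψ.IsPrimitive)
    (v : G → R) : (circulant v).det = ∏ i, ∑ m, v m * ψ (i * m) := by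
  have h := congrArg det (charMatrix_mul_circulant ψ v)
  rw [det_mul, det_mul, det_diagonal, mul_comm _ (charMatrix ψ).det] at h
  exact mul_left_cancel₀ (det_charMatrix_ne_zero hψ) h

end AddChar

theorem ZMod.natCast_ne_zero_of_pos_of_lt {m N : ℕ} (h0 : 0 < m) (hN : m < N) :
    (m : ZMod N) ≠ 0 := fun h =>
  absurd (Nat.le_of_dvd h0 ((ZMod.natCast_eq_zero_iff m N).mp h)) (by omega)

theorem ZMod.prod_univ_eq_prod_Icc {M : Type*} [CommMonoid M] (N : ℕ) [NeZero N]
    (f : ZMod N → M) : ∏ i, f i = ∏ j ∈ Icc 1 N, f j := by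
  have h : ∏ j ∈ range N, f j = ∏ i, f i :=
    prod_nbij' (fun j => j) ZMod.val (by simp) (by simp [ZMod.val_lt])
      (fun j hj => ZMod.val_natCast_of_lt (mem_range.mp hj)) (by simp) (by simp)
  rw [← h, ← Ico_add_one_right_eq_Icc, prod_Ico_eq_prod_range, Nat.add_sub_cancel]
  obtain ⟨N, rfl⟩ := Nat.exists_eq_succ_of_ne_zero (NeZero.ne N)
  rw [prod_range_succ', prod_range_succ]
  simp [add_comm 1]

theorem ZMod.neg_natCast_eq_self (n : ℕ) : -(n : ZMod (2 * n)) = n := by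
  rw [neg_eq_iff_add_eq_zero, ← Nat.cast_add, ← two_mul, ZMod.natCast_self]

section MobiusLadder

variable {n : ℕ}

abbrev mobiusLadderJumps (n : ℕ) : Finset (ZMod (2 * n)) := {1, -1, (n : ZMod (2 * n))}

theorem mobiusLadder_adj [NeZero n] {i j : ZMod (2 * n)} :
    (mobiusLadder n).Adj i j ↔ i - j ∈ mobiusLadderJumps n := by
  have hpos := NeZero.pos n
  have h1 : (1 : ZMod (2 * n)) ≠ 0 :=
    mod_cast ZMod.natCast_ne_zero_of_pos_of_lt one_pos (by omega)
  have hn : (n : ZMod (2 * n)) ≠ 0 := ZMod.natCast_ne_zero_of_pos_of_lt hpos (by omega)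
  simp only [mobiusLadder, fromRel_adj, ← neg_sub i j, neg_eq_iff_eq_neg,
    ZMod.neg_natCast_eq_self, mem_insert, mem_singleton, ne_eq, ← sub_eq_zero (a := i)]
  constructor
  · rintro ⟨-, h⟩
    tauto
  · rintro (h | h | h) <;> simp_all

theorem adjMatrix_mobiusLadder [NeZero n] (R : Type*) [Zero R] [One R]
    [DecidableRel (mobiusLadder n).Adj] :
    (mobiusLadder n).adjMatrix R =
      circulant fun a => if a ∈ mobiusLadderJumps n then 1 else 0 := by
  ext i j
  simp only [adjMatrix_apply, circulant_apply, mobiusLadder_adj]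

theorem sum_mobiusLadderJumps_stdAddChar [NeZero n] (hn : n ≠ 1) (j : ℕ) :
    ∑ m ∈ mobiusLadderJumps n, ZMod.stdAddChar ((j : ZMod (2 * n)) * m) =
      (((-1 : ℝ) ^ j + 2 * Real.cos (j * π / n) : ℝ) : ℂ) := by
  have hpos := NeZero.pos n
  have two_ne : ((2 : ℕ) : ZMod (2 * n)) ≠ 0 :=
    ZMod.natCast_ne_zero_of_pos_of_lt two_pos (by omega)
  have pred_ne : ((n - 1 : ℕ) : ZMod (2 * n)) ≠ 0 :=
    ZMod.natCast_ne_zero_of_pos_of_lt (by omega) (by omega)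
  have succ_ne : ((n + 1 : ℕ) : ZMod (2 * n)) ≠ 0 :=
    ZMod.natCast_ne_zero_of_pos_of_lt (by omega) (by omega)
  rw [Nat.cast_pred hpos] at pred_ne
  have h1 : (1 : ZMod (2 * n)) ∉ ({-1, (n : ZMod (2 * n))} : Finset _) := by
    simp only [mem_insert, mem_singleton, not_or]
    exact ⟨fun h => two_ne (by push_cast; linear_combination h),
      fun h => pred_ne (by linear_combination -h)⟩
  have h2 : (-1 : ZMod (2 * n)) ∉ ({(n : ZMod (2 * n))} : Finset _) := fun h =>
    succ_ne (by push_cast; linear_combination -mem_singleton.mp h)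
  have hψ : ∀ k : ℤ,
      ZMod.stdAddChar (k : ZMod (2 * n)) = Complex.exp (k * π / n * Complex.I) := by
    intro k
    rw [ZMod.stdAddChar_coe]
    congr 1
    push_cast
    field_simp
  rw [sum_insert h1, sum_insert h2, sum_singleton, mul_one, mul_neg, mul_one, ← Nat.cast_mul,
    ← Int.cast_natCast, ← Int.cast_natCast (j * n), ← Int.cast_neg, hψ, hψ, hψ]
  have hcos : Complex.exp (j * π / n * Complex.I) + Complex.exp (-(j * π / n) * Complex.I) =
      2 * Complex.cos (j * π / n) := (Complex.two_cos _).symm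
  have hsign : Complex.exp ((j * n : ℕ) * π / n * Complex.I) = (-1) ^ j := by
    rw [← Complex.exp_pi_mul_I, ← Complex.exp_nat_mul]
    have hn0 : (n : ℂ) ≠ 0 := Nat.cast_ne_zero.mpr hpos.ne'
    congr 1
    push_cast
    field_simp
  push_cast at hsign ⊢
  rw [← hsign, ← hcos]
  ring_nf

end MobiusLadder


open scoped Classical in
theorem charpoly_mobiusLadder (n : ℕ) (hn : 1 < n) (x : ℝ) :
    haveI : NeZero (2 * n) := ⟨by omega⟩
    (x • (1 : Matrix (ZMod (2 * n)) (ZMod (2 * n)) ℝ) - (mobiusLadder n).adjMatrix ℝ).det =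
      ∏ j ∈ Finset.Icc 1 (2 * n), (x - ((-1 : ℝ) ^ j + 2 * Real.cos (j * π / n))) := by
  have : NeZero n := ⟨by omega⟩
  apply Complex.ofReal_injective
  rw [adjMatrix_mobiusLadder, ← circulant_single_one, ← circulant_smul, ← circulant_sub,
    ← Complex.ofRealHom_eq_coe, RingHom.map_det, RingHom.mapMatrix_apply, map_circulant,
    AddChar.det_circulant (ZMod.isPrimitive_stdAddChar _), ZMod.prod_univ_eq_prod_Icc,
    Complex.ofReal_prod]
  refine prod_congr rfl fun j _ => ?_
  rw [Complex.ofReal_sub, ← sum_mobiusLadderJumps_stdAddChar (by omega) j]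
  simp only [Pi.sub_apply, Pi.smul_apply, Pi.single_apply, smul_eq_mul, mul_ite, mul_one, mul_zero,
    map_sub, apply_ite Complex.ofRealHom, map_one, map_zero, Complex.ofRealHom_eq_coe, ite_mul,
    one_mul, zero_mul, sub_mul, sum_sub_distrib, sum_ite_eq', mem_univ, if_true, ← sum_filter,
    filter_mem_eq_inter, univ_inter, AddChar.map_zero_eq_one]
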